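/- arXiv:2504.17592 — 2 statements merged into one kernel-verified Lean document; each statement's English description precedes it below -/
import Mathlib

section
/- Let A₊, A₋ ∈ ℝ² be distinct points with ‖A₊‖ = ‖A₋‖ = 1, and define U₀(p) = log(‖p − A₊‖² / ‖p − A₋‖²). Then for every z ∈ ℝ² with ‖z‖ = 1 and z ∉ {A₊, A₋}, the directional derivative of U₀ at z in the direction z equals 0. That is, U₀ satisfies the homogeneous Neumann boundary condition ∂U₀/∂n = 0 on the unit circle away from the two electrode points. -/
/-!
Since `log (‖p - A₊‖² / ‖p - A₋‖²) = log ‖p - A₊‖² - log ‖p - A₋‖²` near `z`, it suffices that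
each `p ↦ log ‖p - a‖²` has derivative `1` at `z` in direction `z` whenever `‖a‖ = ‖z‖`. That
derivative is `2 ⟪z - a, z⟫ / ‖z - a‖²`, and for `‖a‖ = ‖z‖` the chord `z - a` satisfies
`‖z - a‖² = 2 ⟪z - a, z⟫`.
-/

open scoped RealInnerProductSpace Topology

section

variable {E : Type*} [NormedAddCommGroup E] [InnerProductSpace ℝ E] {a z : E}

lemma norm_sub_sq_eq_two_mul_inner_of_norm_eq (h : ‖z‖ = ‖a‖) :
    ‖z - a‖ ^ 2 = 2 * ⟪z - a, z⟫ := by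
  rw [norm_sub_sq_real, inner_sub_left, real_inner_self_eq_norm_sq, real_inner_comm, h]
  ring

lemma hasFDerivAt_log_norm_sub_sq (hz : z ≠ a) :
    HasFDerivAt (fun p : E => Real.log (‖p - a‖ ^ 2))
      ((‖z - a‖ ^ 2)⁻¹ • (2 • innerSL ℝ (z - a))) z := by
  have hsq : HasFDerivAt (fun p : E => ‖p - a‖ ^ 2) (2 • innerSL ℝ (z - a)) z := by
    simpa using ((hasFDerivAt_id z).sub_const a).norm_sq
  exact hsq.log (by simpa [sub_eq_zero] using hz)

lemma hasLineDerivAt_log_norm_sub_sq_self (hz : z ≠ a) (h : ‖z‖ = ‖a‖) :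
    HasLineDerivAt ℝ (fun p : E => Real.log (‖p - a‖ ^ 2)) 1 z z := by
  have hne : 2 * ⟪z - a, z⟫ ≠ 0 := by
    rw [← norm_sub_sq_eq_two_mul_inner_of_norm_eq h]
    simpa [sub_eq_zero] using hz
  convert (hasFDerivAt_log_norm_sub_sq hz).hasLineDerivAt z using 1
  simp only [FunLike.coe_smul, Pi.smul_apply, nsmul_eq_mul, smul_eq_mul,
    Nat.cast_ofNat, norm_sub_sq_eq_two_mul_inner_of_norm_eq h]
  exact (inv_mul_cancel₀ hne).symm

end

theorem stmt_3_general (Ap Am : EuclideanSpace ℝ (Fin 2))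
    (hAp : ‖Ap‖ = 1) (hAm : ‖Am‖ = 1)
    (z : EuclideanSpace ℝ (Fin 2)) (hz : ‖z‖ = 1) (hzp : z ≠ Ap) (hzm : z ≠ Am) :
    lineDeriv ℝ
      (fun p : EuclideanSpace ℝ (Fin 2) =>
        Real.log (‖p - Ap‖ ^ 2 / ‖p - Am‖ ^ 2)) z z = 0 := by
  have hdiff : HasLineDerivAt ℝ
      (fun p : EuclideanSpace ℝ (Fin 2) => Real.log (‖p - Ap‖ ^ 2) - Real.log (‖p - Am‖ ^ 2))
      (1 - 1) z z :=
    HasDerivAt.sub (hasLineDerivAt_log_norm_sub_sq_self hzp (hz.trans hAp.symm))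
      (hasLineDerivAt_log_norm_sub_sq_self hzm (hz.trans hAm.symm))
  have hlog_div : (fun p : EuclideanSpace ℝ (Fin 2) => Real.log (‖p - Ap‖ ^ 2 / ‖p - Am‖ ^ 2))
      =ᶠ[𝓝 z] fun p => Real.log (‖p - Ap‖ ^ 2) - Real.log (‖p - Am‖ ^ 2) := by
    filter_upwards [isOpen_ne.mem_nhds hzp, isOpen_ne.mem_nhds hzm] with p hp hm
    exact Real.log_div (by simpa [sub_eq_zero] using hp) (by simpa [sub_eq_zero] using hm)
  simpa using (hdiff.congr_of_eventuallyEq hlog_div).lineDeriv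

/-- For distinct unit points `A₊, A₋` on the unit circle, the
background potential `U₀(p) = log (‖p - A₊‖² / ‖p - A₋‖²)` has vanishing outward
normal derivative on the unit circle away from the electrodes: for every `z` with
`‖z‖ = 1`, `z ≠ A₊`, `z ≠ A₋`, the directional derivative of `U₀` at `z` in the
direction `z` equals `0`. -/
theorem stmt_3 (Ap Am : EuclideanSpace ℝ (Fin 2)) (hA : Ap ≠ Am)
    (hAp : ‖Ap‖ = 1) (hAm : ‖Am‖ = 1)
    (z : EuclideanSpace ℝ (Fin 2)) (hz : ‖z‖ = 1) (hzp : z ≠ Ap) (hzm : z ≠ Am) :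
    lineDeriv ℝ
      (fun p : EuclideanSpace ℝ (Fin 2) =>
        Real.log (‖p - Ap‖ ^ 2 / ‖p - Am‖ ^ 2)) z z = 0 :=
  stmt_3_general Ap Am hAp hAm z hz hzp hzm
end

section
/- Let H : ℝ² → ℝ² be a symmetric linear map, and let A > 0, r > 0, ξ ∈ ℝ. For angle ξ set u_ξ = (cos ξ, sin ξ) and u_ξ⊥ = (−sin ξ, cos ξ), and define G(r, ξ) = (A² r / (2π)) ⟪u_ξ, H u_ξ⟫ + (A² / (2π r)) ⟪u_ξ⊥, H u_ξ⊥⟫. Then G(1/r, ξ + π/2) = G(r, ξ): the second-order term of the linearized EIT forward map is invariant under replacing the aspect ratio r by 1/r while rotating the orientation angle ξ by π/2. -/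
open scoped RealInnerProductSpace

/-- The vector `(x, y)` in the Euclidean plane. -/
noncomputable def vec2 (x y : ℝ) : EuclideanSpace ℝ (Fin 2) :=
  (WithLp.equiv 2 (Fin 2 → ℝ)).symm ![x, y]

/-- For a symmetric linear map `H` on ℝ², `A > 0`, `r > 0`, with
`u_ξ = (cos ξ, sin ξ)`, `u_ξ⊥ = (−sin ξ, cos ξ)` and
`G(r, ξ) = (A² r / (2π)) ⟪u_ξ, H u_ξ⟫ + (A² / (2π r)) ⟪u_ξ⊥, H u_ξ⊥⟫`,
we have `G(1/r, ξ + π/2) = G(r, ξ)`: the second-order term of the linearized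
EIT forward map is invariant under `r ↦ 1/r`, `ξ ↦ ξ + π/2`. -/
theorem stmt_10
    (H : EuclideanSpace ℝ (Fin 2) →ₗ[ℝ] EuclideanSpace ℝ (Fin 2))
    (hH : ∀ x y : EuclideanSpace ℝ (Fin 2), ⟪H x, y⟫ = ⟪x, H y⟫)
    (A r : ℝ) (hA : 0 < A) (hr : 0 < r)
    (G : ℝ → ℝ → ℝ)
    (hG : ∀ r' ξ' : ℝ,
      G r' ξ' =
        A ^ 2 * r' / (2 * Real.pi) *
            ⟪vec2 (Real.cos ξ') (Real.sin ξ'), H (vec2 (Real.cos ξ') (Real.sin ξ'))⟫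
          + A ^ 2 / (2 * Real.pi * r') *
            ⟪vec2 (-Real.sin ξ') (Real.cos ξ'), H (vec2 (-Real.sin ξ') (Real.cos ξ'))⟫) :
    ∀ ξ : ℝ, G (1 / r) (ξ + Real.pi / 2) = G r ξ := by
  intro ξ
  have hneg : ∀ x y : ℝ, vec2 (-x) (-y) = -vec2 x y := by
    intro x y
    simp [vec2]
    ext i
    fin_cases i <;> simp
  rw [hG, hG, Real.cos_add_pi_div_two, Real.sin_add_pi_div_two]
  have h1 : vec2 (-Real.cos ξ) (-Real.sin ξ) = -vec2 (Real.cos ξ) (Real.sin ξ) :=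
    hneg _ _
  rw [h1]
  simp only [map_neg, inner_neg_neg]
  have hπ := Real.pi_pos
  field_simp
  ring
end
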